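/- arXiv:1803.05503 — 2 statements merged into one kernel-verified Lean document; each statement's English description precedes it below -/
import Mathlib

section
/- Consider the real recurrence e_n^{k+1} = α·e_{n-1}^{k} + β·e_{n-1}^{k+1} for n ≥ 1, k ≥ 0, with e_0^{k} = 0 for all k ≥ 0, initial superdiagonal e_n^{0} = γ + β·e_{n-1}^{0} (so e_n^0 = γ(βⁿ-1)/(β-1) when β ≠ 1), where α, γ ≥ 0 and β ≥ 1. Then for all n ≥ 1 and k ≥ 0, e_n^{k} ≤ γ · α^{k} · β^{n-k-1} · (1/(k+1)!) · ∏_{j=0}^{k} (n-j). -/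
open Finset

/-- closed-form bound for the Parareal double recurrence
e_n^{k+1} = α e_{n-1}^k + β e_{n-1}^{k+1}, e_0^k = 0, e_n^0 = γ + β e_{n-1}^0. -/
theorem parareal_recurrence_bound (α β γ : ℝ) (hα : 0 ≤ α) (hβ : 1 ≤ β) (hγ : 0 ≤ γ)
    (e : ℕ → ℕ → ℝ)
    (h0 : ∀ k, e 0 k = 0)
    (hrec : ∀ n, 1 ≤ n → ∀ k, e n (k + 1) = α * e (n - 1) k + β * e (n - 1) (k + 1))
    (hinit : ∀ n, 1 ≤ n → e n 0 = γ + β * e (n - 1) 0) :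
    ∀ n, 1 ≤ n → ∀ k,
      e n k ≤ γ * α ^ k * β ^ ((n : ℝ) - k - 1) *
        ((Nat.factorial (k + 1) : ℝ))⁻¹ * ∏ j ∈ Finset.range (k + 1), ((n : ℝ) - j) := by
  have hβ0 : (0:ℝ) < β := lt_of_lt_of_le one_pos hβ
  -- e vanishes on and below the diagonal
  have hz : ∀ n k : ℕ, n ≤ k → e n k = 0 := by
    intro n
    induction n with
    | zero => intro k _; exact h0 k
    | succ m ih =>
      intro k hk
      obtain ⟨k', rfl⟩ : ∃ k', k = k' + 1 := ⟨k - 1, by omega⟩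
      rw [hrec (m+1) (by omega) k', Nat.add_sub_cancel, ih k' (by omega),
        ih (k'+1) (by omega)]
      ring
  set B : ℕ → ℕ → ℝ := fun n k => γ * α ^ k * β ^ ((n : ℝ) - k - 1) *
      ((Nat.factorial (k + 1) : ℝ))⁻¹ * ∏ j ∈ Finset.range (k + 1), ((n : ℝ) - j) with hB
  -- the key algebraic identity
  have hid : ∀ n k : ℕ, α * B n k + β * B n (k+1) = B (n+1) (k+1) := by
    intro n k
    simp only [hB]
    have hp1 : ∏ j ∈ Finset.range (k + 1 + 1), ((n : ℝ) - (j:ℕ))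
        = (∏ j ∈ Finset.range (k + 1), ((n : ℝ) - j)) * ((n:ℝ) - ((k:ℝ)+1)) := by
      rw [Finset.prod_range_succ]; push_cast; ring
    have hp2 : ∏ j ∈ Finset.range (k + 1 + 1), ((((n+1:ℕ)):ℝ) - (j:ℕ))
        = ((n:ℝ)+1) * ∏ j ∈ Finset.range (k + 1), ((n : ℝ) - j) := by
      rw [Finset.prod_range_succ']
      have h := Finset.prod_congr rfl
        (fun (j:ℕ) (_ : j ∈ Finset.range (k+1)) =>
          show (((n+1:ℕ)):ℝ) - ((j+1 : ℕ):ℝ) = (n:ℝ) - j by push_cast; ring)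
      rw [h]
      push_cast
      ring
    have he1 : β ^ ((n : ℝ) - ((k+1:ℕ):ℝ) - 1) = β ^ ((n : ℝ) - (k:ℝ) - 1) / β := by
      rw [show (n : ℝ) - ((k+1:ℕ):ℝ) - 1 = ((n:ℝ) - k - 1) - 1 by push_cast; ring,
        Real.rpow_sub hβ0, Real.rpow_one]
    have he2 : (((n+1:ℕ)):ℝ) - ((k+1:ℕ):ℝ) - 1 = (n:ℝ) - (k:ℝ) - 1 := by push_cast; ring
    rw [hp1, hp2, he1, he2, Nat.factorial_succ (k+1)]
    have hf : ((Nat.factorial (k+1) : ℝ)) ≠ 0 := by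
      exact_mod_cast Nat.factorial_ne_zero (k+1)
    push_cast
    field_simp
    ring
  -- main induction on n
  intro n
  induction n with
  | zero => intro h; exact absurd h (by omega)
  | succ m ih =>
    intro _ k
    show e (m+1) k ≤ B (m+1) k
    rcases Nat.eq_zero_or_pos m with rfl | hm
    · -- n = 1
      cases k with
      | zero =>
        have h1 : e 1 0 = γ := by
          have := hinit 1 le_rfl
          simpa [h0] using this
        rw [h1]
        simp only [hB]
        norm_num
      | succ k =>
        rw [hz 1 (k+1) (by omega)]
        have hzero : ∏ j ∈ Finset.range (k+1+1), (((1:ℕ):ℝ) - (j:ℕ)) = 0 := by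
          apply Finset.prod_eq_zero (Finset.mem_range.mpr (show 1 < k+1+1 by omega))
          norm_num
        simp only [hB, hzero, mul_zero]
        exact le_rfl
    · have ihm : ∀ k, e m k ≤ B m k := ih hm
      cases k with
      | zero =>
        have h1 : e (m+1) 0 = γ + β * e m 0 := by
          simpa using hinit (m+1) (by omega)
        have h2 : e m 0 ≤ B m 0 := ihm 0
        have hbm : β ^ ((m:ℝ) - ((0:ℕ):ℝ) - 1) = β ^ (m:ℝ) / β := by
          rw [show (m:ℝ) - ((0:ℕ):ℝ) - 1 = (m:ℝ) - 1 by push_cast; ring,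
            Real.rpow_sub hβ0, Real.rpow_one]
        have hge1 : (1:ℝ) ≤ β ^ (m:ℝ) := Real.one_le_rpow hβ (by positivity)
        have hBm : β * B m 0 = γ * β ^ (m:ℝ) * m := by
          simp only [hB, pow_zero, Finset.prod_range_one, hbm]
          norm_num [Nat.factorial]
          field_simp
        have hBm1 : B (m+1) 0 = γ * β ^ (m:ℝ) * ((m:ℝ)+1) := by
          simp only [hB, pow_zero, Finset.prod_range_one]
          rw [show (((m+1:ℕ)):ℝ) - ((0:ℕ):ℝ) - 1 = (m:ℝ) by push_cast; ring]
          norm_num [Nat.factorial]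
        rw [h1, hBm1]
        have h3 : β * e m 0 ≤ γ * β ^ (m:ℝ) * m := by
          calc β * e m 0 ≤ β * B m 0 := by
                exact mul_le_mul_of_nonneg_left h2 hβ0.le
            _ = _ := hBm
        have h4 : γ ≤ γ * β ^ (m:ℝ) := by nlinarith
        nlinarith [Nat.cast_nonneg (α := ℝ) m, mul_nonneg hγ (le_trans one_pos.le hge1)]
      | succ k =>
        have h1 : e (m+1) (k+1) = α * e m k + β * e m (k+1) := by
          simpa using hrec (m+1) (by omega) k
        rw [h1, ← hid m k]
        exact add_le_add (mul_le_mul_of_nonneg_left (ihm k) hα)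
          (mul_le_mul_of_nonneg_left (ihm (k+1)) hβ0.le)
end

section
/- Let F and Ḡ be maps ℝⁿ → ℝⁿ (propagators over one interval starting from a given initial value), let F̄ be a third map, and suppose: (i) ‖F(U) - F̄(U)‖ ≤ δ₁ for all U; (ii) ‖F̄(U) - Ḡ(U)‖ ≤ δ₂ for all U and U ↦ F̄(U) - Ḡ(U) is Lipschitz with constant λ; (iii) Ḡ is Lipschitz with constant β. Then for any exact value u*, previous iterate V, and current iterate W, the Parareal update U⁺ := F(V) + Ḡ(W) - Ḡ(V) satisfies ‖u* - U⁺‖ ≤ λ‖u* - V‖ + 2δ₁ + β‖u* - W‖, where u* = F(u*₋) with u*₋ the exact starting value (i.e. u* is the exact propagated value from the exact initial condition). -/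
theorem norm_sub_le_two_mul_of_forall_norm_le {α E : Type*} [SeminormedAddCommGroup E]
    {f : α → E} {δ : ℝ} (hf : ∀ x, ‖f x‖ ≤ δ) (x y : α) : ‖f x - f y‖ ≤ 2 * δ :=
  calc ‖f x - f y‖ ≤ ‖f x‖ + ‖f y‖ := norm_sub_le _ _
    _ ≤ δ + δ := add_le_add (hf x) (hf y)
    _ = 2 * δ := (two_mul δ).symm

theorem norm_parareal_update_error_le {α E : Type*} [SeminormedAddCommGroup E]
    (F Fbar G : α → E) (u v w : α) :
    ‖F u - (F v + G w - G v)‖ ≤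
      ‖(F u - Fbar u) - (F v - Fbar v)‖ + ‖(Fbar u - G u) - (Fbar v - G v)‖ + ‖G u - G w‖ := by
  have split : F u - (F v + G w - G v) =
      ((F u - Fbar u) - (F v - Fbar v)) + ((Fbar u - G u) - (Fbar v - G v)) + (G u - G w) := by
    abel
  rw [split]
  exact norm_add₃_le

theorem parareal_one_step_estimate_general {n : ℕ}
    (F Fbar Gbar : EuclideanSpace ℝ (Fin n) → EuclideanSpace ℝ (Fin n))
    (δ₁ lam β : ℝ)
    (h1 : ∀ U, ‖F U - Fbar U‖ ≤ δ₁)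
    (h2lip : ∀ U V, ‖(Fbar U - Gbar U) - (Fbar V - Gbar V)‖ ≤ lam * ‖U - V‖)
    (h3 : ∀ U V, ‖Gbar U - Gbar V‖ ≤ β * ‖U - V‖)
    (ustarm V W : EuclideanSpace ℝ (Fin n)) :
    ‖F ustarm - (F V + Gbar W - Gbar V)‖ ≤
      lam * ‖ustarm - V‖ + 2 * δ₁ + β * ‖ustarm - W‖ := by
  have fine_defect := norm_sub_le_two_mul_of_forall_norm_le (f := fun U => F U - Fbar U) h1
  calc ‖F ustarm - (F V + Gbar W - Gbar V)‖
      ≤ ‖(F ustarm - Fbar ustarm) - (F V - Fbar V)‖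
          + ‖(Fbar ustarm - Gbar ustarm) - (Fbar V - Gbar V)‖ + ‖Gbar ustarm - Gbar W‖ :=
        norm_parareal_update_error_le F Fbar Gbar ustarm V W
    _ ≤ 2 * δ₁ + lam * ‖ustarm - V‖ + β * ‖ustarm - W‖ :=
        add_le_add (add_le_add (fine_defect ustarm V) (h2lip ustarm V)) (h3 ustarm W)
    _ = lam * ‖ustarm - V‖ + 2 * δ₁ + β * ‖ustarm - W‖ := by ring

/-- abstract one-step Parareal error estimate.
U⁺ = F(V) + Ḡ(W) − Ḡ(V), u* = F(u*₋):
‖u* − U⁺‖ ≤ λ‖u*₋ − V‖ + 2δ₁ + β‖u*₋ − W‖. -/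
theorem parareal_one_step_estimate {n : ℕ}
    (F Fbar Gbar : EuclideanSpace ℝ (Fin n) → EuclideanSpace ℝ (Fin n))
    (δ₁ δ₂ lam β : ℝ)
    (h1 : ∀ U, ‖F U - Fbar U‖ ≤ δ₁)
    (h2 : ∀ U, ‖Fbar U - Gbar U‖ ≤ δ₂)
    (h2lip : ∀ U V, ‖(Fbar U - Gbar U) - (Fbar V - Gbar V)‖ ≤ lam * ‖U - V‖)
    (h3 : ∀ U V, ‖Gbar U - Gbar V‖ ≤ β * ‖U - V‖)
    (ustarm V W : EuclideanSpace ℝ (Fin n)) :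
    ‖F ustarm - (F V + Gbar W - Gbar V)‖ ≤
      lam * ‖ustarm - V‖ + 2 * δ₁ + β * ‖ustarm - W‖ :=
  parareal_one_step_estimate_general F Fbar Gbar δ₁ lam β h1 h2lip h3 ustarm V W
end
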